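/- arXiv:2301.13781 — 2 statements merged into one kernel-verified Lean document; each statement's English description precedes it below -/
import Mathlib

section
/- For any s ≥ 0 there is a constant C = C(s, d) such that |M_h(ξ)^{2s} − |ξ|^{2s}| ≤ C h^2 |ξ|^{2s+2} for all ξ ∈ ℝ^d and all h > 0, where M_h(ξ)^2 = ∑_{j=1}^d (4/h^2) sin^2(ξ_j h / 2). -/
/-!
With `A = ‖ξ‖²` and `B = M_h(ξ)²`, the Taylor bounds `x² - x⁴/3 ≤ sin² x ≤ x²`, applied coordinatewise
at `x = ξ_j h / 2`, give `0 ≤ B ≤ A` and `A - B ≤ h² A² / 12`. Writing `B = u A` with `u ∈ [0, 1]`,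
`A^s - B^s = A^s (1 - u^s)`, and `1 - u^s ≤ max s 1 · (1 - u)` (Bernoulli for `s ≥ 1`,
`u ≤ u^s` for `s ≤ 1`), so `A^s - B^s ≤ max s 1 · A^{s-1} (A - B) ≤ (max s 1 / 12) h² A^{s+1}`.
-/

open Real
open scoped BigOperators

noncomputable section

abbrev Ed (d : ℕ) := EuclideanSpace ℝ (Fin d)

/-- The symbol `M_h(ξ)² = ∑_j (4/h²) sin²(ξ_j h/2)` of the discrete Laplacian. -/
def Msq (d : ℕ) (h : ℝ) (ξ : Ed d) : ℝ :=
  ∑ j : Fin d, (4 / h ^ 2) * Real.sin (ξ j * h / 2) ^ 2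

namespace Real

lemma sq_sub_sin_sq_le (x : ℝ) : x ^ 2 - sin x ^ 2 ≤ x ^ 4 / 3 := by
  have h_add : |x + sin x| ≤ 2 * |x| := by
    linarith [abs_add_le x (sin x), abs_sin_le_abs (x := x)]
  calc x ^ 2 - sin x ^ 2 = (x - sin x) * (x + sin x) := by ring
    _ ≤ |x - sin x| * |x + sin x| := by rw [← abs_mul]; exact le_abs_self _
    _ ≤ |x| ^ 3 / 6 * (2 * |x|) := by gcongr; exact abs_sub_sin_le x
    _ = x ^ 4 / 3 := by rw [← Even.pow_abs (by decide : Even 4) x]; ring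

lemma one_sub_rpow_le_max_mul {u p : ℝ} (hu₀ : 0 ≤ u) (hu₁ : u ≤ 1) (hp : 0 ≤ p) :
    1 - u ^ p ≤ max p 1 * (1 - u) := by
  rcases le_total p 1 with hp₁ | hp₁
  · have : u ^ (1 : ℝ) ≤ u ^ p := rpow_le_rpow_of_exponent_ge' hu₀ hu₁ hp hp₁
    rw [rpow_one] at this
    rw [max_eq_right hp₁]
    linarith
  · have := one_add_mul_self_le_rpow_one_add (s := u - 1) (by linarith) hp₁
    rw [add_sub_cancel] at this
    rw [max_eq_left hp₁]
    linarith

lemma mul_rpow_sub_rpow_le {a b p : ℝ} (hb : 0 ≤ b) (hba : b ≤ a) (hp : 0 ≤ p) :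
    a * (a ^ p - b ^ p) ≤ max p 1 * a ^ p * (a - b) := by
  rcases (hb.trans hba).eq_or_lt with rfl | ha
  · simp [le_antisymm hba hb]
  set u := b / a
  have hb_eq : b = a * u := by rw [mul_div_cancel₀ _ ha.ne']
  have hu₀ : 0 ≤ u := div_nonneg hb ha.le
  have hu₁ : u ≤ 1 := (div_le_one ha).mpr hba
  calc a * (a ^ p - b ^ p) = a ^ p * a * (1 - u ^ p) := by
        rw [hb_eq, mul_rpow ha.le hu₀]; ring
    _ ≤ a ^ p * a * (max p 1 * (1 - u)) := by
        gcongr; exact one_sub_rpow_le_max_mul hu₀ hu₁ hp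
    _ = max p 1 * a ^ p * (a - b) := by rw [hb_eq]; ring

end Real

lemma four_div_sq_mul_sin_sq_le (t h : ℝ) : 4 / h ^ 2 * sin (t * h / 2) ^ 2 ≤ t ^ 2 := by
  rcases eq_or_ne h 0 with rfl | hh
  · simpa using sq_nonneg t
  calc 4 / h ^ 2 * sin (t * h / 2) ^ 2 ≤ 4 / h ^ 2 * (t * h / 2) ^ 2 :=
        mul_le_mul_of_nonneg_left sin_sq_le_sq (by positivity)
    _ = t ^ 2 := by field_simp; ring

lemma sq_sub_four_div_sq_mul_sin_sq_le (t : ℝ) {h : ℝ} (hh : h ≠ 0) :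
    t ^ 2 - 4 / h ^ 2 * sin (t * h / 2) ^ 2 ≤ h ^ 2 / 12 * t ^ 4 :=
  calc t ^ 2 - 4 / h ^ 2 * sin (t * h / 2) ^ 2
      = 4 / h ^ 2 * ((t * h / 2) ^ 2 - sin (t * h / 2) ^ 2) := by field_simp; ring
    _ ≤ 4 / h ^ 2 * ((t * h / 2) ^ 4 / 3) := by gcongr; exact sq_sub_sin_sq_le _
    _ = h ^ 2 / 12 * t ^ 4 := by field_simp; ring

lemma norm_sq_eq_sum_sq {d : ℕ} (ξ : Ed d) : ‖ξ‖ ^ 2 = ∑ j, ξ j ^ 2 := by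
  simp [EuclideanSpace.norm_sq_eq]

lemma Msq_nonneg (d : ℕ) (h : ℝ) (ξ : Ed d) : 0 ≤ Msq d h ξ :=
  Finset.sum_nonneg fun _ _ => by positivity

lemma Msq_le_norm_sq (d : ℕ) (h : ℝ) (ξ : Ed d) : Msq d h ξ ≤ ‖ξ‖ ^ 2 := by
  rw [norm_sq_eq_sum_sq]
  exact Finset.sum_le_sum fun j _ => four_div_sq_mul_sin_sq_le (ξ j) h

lemma norm_sq_sub_Msq_le (d : ℕ) {h : ℝ} (hh : h ≠ 0) (ξ : Ed d) :
    ‖ξ‖ ^ 2 - Msq d h ξ ≤ h ^ 2 / 12 * (‖ξ‖ ^ 2) ^ 2 := by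
  rw [norm_sq_eq_sum_sq, Msq, ← Finset.sum_sub_distrib]
  calc ∑ j, (ξ j ^ 2 - 4 / h ^ 2 * sin (ξ j * h / 2) ^ 2)
      ≤ ∑ j, h ^ 2 / 12 * (ξ j ^ 2) ^ 2 := Finset.sum_le_sum fun j _ => by
        rw [← pow_mul]; exact sq_sub_four_div_sq_mul_sin_sq_le (ξ j) hh
    _ ≤ h ^ 2 / 12 * (∑ j, ξ j ^ 2) ^ 2 := by
        rw [← Finset.mul_sum]
        gcongr
        exact Finset.sum_sq_le_sq_sum_of_nonneg fun j _ => sq_nonneg _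

/-- Symbol error estimate: for `s ≥ 0` there is `C = C(s,d)` with
`|M_h(ξ)^{2s} − |ξ|^{2s}| ≤ C h² |ξ|^{2s+2}` for all `ξ ∈ ℝ^d` and `h > 0`.
Here `M_h(ξ)^{2s} = (M_h(ξ)²)^s`. -/
theorem stmt2 (d : ℕ) (s : ℝ) (hs : 0 ≤ s) :
    ∃ C : ℝ, 0 < C ∧
      ∀ h : ℝ, 0 < h → ∀ ξ : Ed d,
        |Msq d h ξ ^ s - ‖ξ‖ ^ (2 * s)| ≤ C * h ^ 2 * ‖ξ‖ ^ (2 * s + 2) := by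
  refine ⟨max s 1 / 12, by positivity, fun h hh ξ => ?_⟩
  set A := ‖ξ‖ ^ 2
  set B := Msq d h ξ
  have hB : 0 ≤ B := Msq_nonneg d h ξ
  have hBA : B ≤ A := Msq_le_norm_sq d h ξ
  have hpow (t : ℝ) : ‖ξ‖ ^ (2 * t) = A ^ t := by rw [rpow_mul (norm_nonneg ξ), rpow_two]
  rw [show 2 * s + 2 = 2 * (s + 1) by ring, hpow, hpow]
  rcases (hB.trans hBA).eq_or_lt with hA | hA
  · rw [le_antisymm (hA ▸ hBA) hB, hA, sub_self, abs_zero]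
    positivity
  rw [rpow_add_one' hA.le (by linarith), abs_sub_comm,
    abs_of_nonneg (sub_nonneg.mpr (rpow_le_rpow hB hBA hs))]
  refine le_of_mul_le_mul_left ?_ hA
  calc A * (A ^ s - B ^ s) ≤ max s 1 * A ^ s * (A - B) := mul_rpow_sub_rpow_le hB hBA hs
    _ ≤ max s 1 * A ^ s * (h ^ 2 / 12 * A ^ 2) := by
        gcongr; exact norm_sq_sub_Msq_le d hh.ne' ξ
    _ = A * (max s 1 / 12 * h ^ 2 * (A ^ s * A)) := by ring
end
end

section
/- Let t + l > d/2 with t, l ≥ 0 and h ∈ (0, 1]. Then there is a constant C = C(d, t, l) such that sup over ξ ∈ (−π/h, π/h)^d of ∑_{ζ ∈ (2π/h)ℤ^d \ {0}} 1 / (h^{2l} |ξ + ζ|^{2(t+l)}) is at most C h^{2t}. -/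
/-!
On the cube `|ξ_j| ≤ a` every coordinate of `ξ + 2a·z` with `z ∈ ℤ^d` has modulus at least
`a·|z_j|`, so with `a = π/h` we get `|ξ + ζ| ≥ (π/h)|z|` for `ζ = (2π/h)z`. Each term of the sum is
therefore at most `π^{-2(t+l)} h^{2t} |z|^{-2(t+l)}`, and `∑_{z ≠ 0} |z|^{-2(t+l)}` converges
because `2(t+l) > d`, which is the convergence of `p`-series over a lattice of rank `d`.
-/

open Real
open scoped BigOperators

noncomputable section

/-- The lattice point `h·z ∈ ℝ^d` for `z ∈ ℤ^d`. -/
def latPt (d : ℕ) (h : ℝ) (z : Fin d → ℤ) : Ed d :=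
  (EuclideanSpace.equiv (Fin d) ℝ).symm (fun j => h * (z j : ℝ))

theorem abs_mul_le_abs_add_two_mul {a x : ℝ} (hx : |x| ≤ a) (n : ℤ) :
    |a * n| ≤ |x + 2 * a * n| := by
  have ha : 0 ≤ a := (abs_nonneg x).trans hx
  rcases eq_or_ne n 0 with rfl | hn
  · simp
  have hn1 : (1 : ℝ) ≤ |(n : ℝ)| := by exact_mod_cast Int.one_le_abs hn
  have htri := abs_sub (x + 2 * a * n) x
  rw [add_sub_cancel_left] at htri
  calc |a * n| ≤ |2 * a * n| - a := by
        rw [abs_mul, abs_mul, abs_mul, abs_two, abs_of_nonneg ha]; nlinarith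
    _ ≤ |x + 2 * a * n| := by linarith

theorem EuclideanSpace.norm_le_norm_of_forall_norm_apply_le {ι : Type*} [Fintype ι]
    {x y : EuclideanSpace ℝ ι} (h : ∀ i, ‖x i‖ ≤ ‖y i‖) : ‖x‖ ≤ ‖y‖ := by
  rw [EuclideanSpace.norm_eq, EuclideanSpace.norm_eq]
  gcongr with i
  exact h i

theorem one_div_rpow_mul_rpow_le {h a N X l p : ℝ} (hh : 0 < h) (ha : 0 < a) (hN : 0 < N)
    (hp : 0 ≤ p) (hX : a / h * N ≤ X) :
    1 / (h ^ l * X ^ p) ≤ a ^ (-p) * N ^ (-p) * h ^ (p - l) :=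
  calc 1 / (h ^ l * X ^ p) ≤ 1 / (h ^ l * (a / h * N) ^ p) := by gcongr
    _ = a ^ (-p) * N ^ (-p) * h ^ (p - l) := by
      rw [Real.mul_rpow (by positivity) hN.le, Real.div_rpow ha.le hh.le, Real.rpow_sub hh,
        Real.rpow_neg ha.le, Real.rpow_neg hN.le]
      field_simp

theorem latPt_apply (d : ℕ) (h : ℝ) (z : Fin d → ℤ) (j : Fin d) :
    latPt d h z j = h * z j :=
  rfl

theorem latPt_one_ne_zero {d : ℕ} {z : Fin d → ℤ} (hz : z ≠ 0) : latPt d 1 z ≠ 0 := by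
  obtain ⟨j, hj⟩ := Function.ne_iff.mp hz
  refine fun h0 => hj ?_
  simpa [latPt_apply] using congrArg (· j) h0

theorem norm_latPt_le_norm_add_latPt (d : ℕ) {a : ℝ} {ξ : Ed d} (hξ : ∀ j, |ξ j| ≤ a)
    (z : Fin d → ℤ) : a * ‖latPt d 1 z‖ ≤ ‖ξ + latPt d (2 * a) z‖ :=
  calc a * ‖latPt d 1 z‖ ≤ ‖a • latPt d 1 z‖ := by
        rw [norm_smul, Real.norm_eq_abs]; gcongr; exact le_abs_self a
    _ ≤ ‖ξ + latPt d (2 * a) z‖ :=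
        EuclideanSpace.norm_le_norm_of_forall_norm_apply_le fun j => by
          simpa [latPt_apply] using abs_mul_le_abs_add_two_mul (hξ j) (z j)

open Module in
theorem summable_norm_latPt_rpow (d : ℕ) {p : ℝ} (hp : (d : ℝ) < p) :
    Summable fun z : Fin d → ℤ => ‖latPt d 1 z‖ ^ (-p) := by
  let e := (EuclideanSpace.basisFun (Fin d) ℝ).toBasis
  let b := e.restrictScalars ℤ
  have hrank : finrank ℤ (Submodule.span ℤ (Set.range e)) = d := by
    rw [ZLattice.rank ℝ]; simp
  have hL := ZLattice.summable_norm_rpow _ (-p) (by rw [hrank]; linarith)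
  have hb : ∀ z, (b.equivFun.symm z : Ed d) = latPt d 1 z := by
    intro z; ext j
    rw [Basis.equivFun_symm_apply, Submodule.coe_sum]
    simp only [Submodule.coe_smul_of_tower, b, Basis.restrictScalars_apply]
    simp [e, latPt, Pi.single_apply]
  refine (hL.comp_injective b.equivFun.symm.injective).congr fun z => ?_
  rw [Function.comp_apply, Submodule.coe_norm, hb]

theorem stmt4_general (d : ℕ) (t l : ℝ) (htl : (d : ℝ) / 2 < t + l) :
    ∃ C : ℝ, 0 < C ∧
      ∀ h : ℝ, 0 < h → h ≤ 1 → ∀ ξ : Ed d, (∀ j, |ξ j| < π / h) →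
        (∑' ζ : {z : Fin d → ℤ // z ≠ 0},
            1 / (h ^ (2 * l) * ‖ξ + latPt d (2 * π / h) ζ.1‖ ^ (2 * (t + l))))
          ≤ C * h ^ (2 * t) := by
  set p := 2 * (t + l)
  have hpd : (d : ℝ) < p := by linarith
  have hp : 0 ≤ p := (Nat.cast_nonneg d).trans hpd.le
  set S := ∑' ζ : {z : Fin d → ℤ // z ≠ 0}, ‖latPt d 1 ζ.1‖ ^ (-p)
  have hS : 0 ≤ S := tsum_nonneg fun _ => by positivity
  refine ⟨π ^ (-p) * S + 1, by positivity, fun h hh _ ξ hξ => ?_⟩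
  have hterm (ζ : {z : Fin d → ℤ // z ≠ 0}) :
      1 / (h ^ (2 * l) * ‖ξ + latPt d (2 * π / h) ζ.1‖ ^ p)
        ≤ π ^ (-p) * ‖latPt d 1 ζ.1‖ ^ (-p) * h ^ (2 * t) := by
    have hX := norm_latPt_le_norm_add_latPt d (a := π / h) (fun j => (hξ j).le) ζ.1
    rw [← mul_div_assoc] at hX
    convert one_div_rpow_mul_rpow_le hh pi_pos (norm_pos_iff.2 (latPt_one_ne_zero ζ.2)) hp hX
      using 2
    congr 1; simp only [p]; ring
  have hB : Summable fun ζ : {z : Fin d → ℤ // z ≠ 0} =>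
      π ^ (-p) * ‖latPt d 1 ζ.1‖ ^ (-p) * h ^ (2 * t) :=
    (((summable_norm_latPt_rpow d hpd).subtype _).mul_left _).mul_right _
  calc _ ≤ ∑' ζ : {z : Fin d → ℤ // z ≠ 0}, π ^ (-p) * ‖latPt d 1 ζ.1‖ ^ (-p) * h ^ (2 * t) :=
        (hB.of_nonneg_of_le (fun _ => by positivity) hterm).tsum_le_tsum hterm hB
    _ = π ^ (-p) * S * h ^ (2 * t) := by rw [tsum_mul_right, tsum_mul_left]
    _ ≤ (π ^ (-p) * S + 1) * h ^ (2 * t) := by gcongr; linarith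

/-- Dual-lattice tail sum estimate: for `t + l > d/2`, `t, l ≥ 0` and `h ∈ (0,1]`,
`∑_{ζ ∈ (2π/h)ℤ^d \ {0}} 1/(h^{2l}|ξ+ζ|^{2(t+l)}) ≤ C h^{2t}` uniformly over
`ξ ∈ (−π/h, π/h)^d`, with `C = C(d,t,l)`. -/
theorem stmt4 (d : ℕ) (t l : ℝ) (ht : 0 ≤ t) (hl : 0 ≤ l) (htl : (d : ℝ) / 2 < t + l) :
    ∃ C : ℝ, 0 < C ∧
      ∀ h : ℝ, 0 < h → h ≤ 1 → ∀ ξ : Ed d, (∀ j, |ξ j| < π / h) →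
        (∑' ζ : {z : Fin d → ℤ // z ≠ 0},
            1 / (h ^ (2 * l) * ‖ξ + latPt d (2 * π / h) ζ.1‖ ^ (2 * (t + l))))
          ≤ C * h ^ (2 * t) :=
  stmt4_general d t l htl
end
end
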